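/- arXiv:1504.01931 — 3 statements merged into one kernel-verified Lean document; each statement's English description precedes it below -/
import Mathlib

section
/- For all multivariate polynomials f, g, p ∈ k[X_i : i ∈ ι] and every natural number N, one has Σ_{a+b=N} m_a(m_b(f,g), p) = Σ_{a+b=N} m_a(f, m_b(g,p)). Equivalently, the Moyal star product f ⋆ g = Σ_{n≥0} hⁿ m_n(f,g) is an associative product on k[X_i : i ∈ ι][[h]]. -/
/-!
Put `f`, `g`, `p` into three disjoint copies ("slots") of the variables, so that `f ⊗ g ⊗ p`
becomes one polynomial `T` in the variables `X (s, i)`. With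
`D s t = ∑ ω i j • ∂_{(s,i)} ∂_{(t,j)}`, `m_n(F, G)` is `1/n!` times `(D 0 1)ⁿ (F ⊗ G)` with all
slots collapsed. Merging two slots turns `D` into the sum of the operators between the merged
slots, so after collapsing `m_a(m_b(f,g),p) = (D 0 2 + D 1 2)ᵃ (D 0 1)ᵇ T / (a! b!)` and
`m_a(f,m_b(g,p)) = (D 0 1 + D 0 2)ᵃ (D 1 2)ᵇ T / (a! b!)`. All `D s t` commute, because partial
derivatives do, so by the binomial theorem both sides of the identity are
`(D 0 1 + D 0 2 + D 1 2)ᴺ T / N!`, collapsed.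
-/

open MvPolynomial

/-- Iterated partial derivative along a tuple of variable indices. -/
noncomputable def iterPDeriv {k : Type*} [CommRing k] {ι : Type*} {n : ℕ}
    (v : Fin n → ι) (f : MvPolynomial ι k) : MvPolynomial ι k :=
  (List.ofFn v).foldl (fun g i => MvPolynomial.pderiv i g) f

/-- The `n`-th Moyal bidifferential operator
`m_n(f,g) = (1/n!) · Σ_{((i₁,j₁),…,(iₙ,jₙ)) ∈ (ι×ι)ⁿ} (∏ₜ ω(iₜ,jₜ)) ·
  (∂_{i₁}⋯∂_{iₙ} f) · (∂_{j₁}⋯∂_{jₙ} g)`. -/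
noncomputable def moyalTerm {k : Type*} [Field k] {ι : Type*} [Fintype ι]
    (ω : ι → ι → k) (n : ℕ) (f g : MvPolynomial ι k) : MvPolynomial ι k :=
  (n.factorial : k)⁻¹ •
    ∑ p : Fin n → ι × ι,
      (∏ t, ω (p t).1 (p t).2) •
        (iterPDeriv (fun t => (p t).1) f * iterPDeriv (fun t => (p t).2) g)

namespace MvPolynomial

variable {R σ τ : Type*}

theorem pderiv_pderiv_comm [CommRing R] (i j : σ) (p : MvPolynomial σ R) :
    pderiv i (pderiv j p) = pderiv j (pderiv i p) := by
  classical
  have : ⁅pderiv i, pderiv j⁆ = (0 : Derivation R (MvPolynomial σ R) (MvPolynomial σ R)) :=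
    derivation_ext fun l => by
      rw [Derivation.commutator_apply]
      simp only [pderiv_X, Pi.single_apply]
      split_ifs <;> simp
  have hp := congr($this p)
  rw [Derivation.commutator_apply] at hp
  simpa [sub_eq_zero] using hp

theorem pderiv_rename_eq_sum [CommSemiring R] [Fintype σ] [DecidableEq τ] (r : σ → τ) (j : τ)
    (p : MvPolynomial σ R) :
    pderiv j (rename r p) = ∑ i ∈ Finset.univ.filter (r · = j), rename r (pderiv i p) := by
  classical
  induction p using MvPolynomial.induction_on with
  | C c => simp
  | add p q hp hq => simp [hp, hq, Finset.sum_add_distrib]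
  | mul_X p n ih =>
    simp [pderiv_X, Pi.single_apply, Finset.sum_add_distrib, ih, apply_ite (rename r),
      Finset.mul_sum]

end MvPolynomial

theorem iterPDeriv_succ {R ι : Type*} [CommRing R] {n : ℕ} (v : Fin (n + 1) → ι)
    (f : MvPolynomial ι R) :
    iterPDeriv v f = iterPDeriv (fun u => v u.succ) (pderiv (v 0) f) := by
  simp [iterPDeriv, List.ofFn_succ]

open Nat Finset in
theorem Commute.inv_factorial_smul_add_pow {K A : Type*} [Field K] [CharZero K] [Semiring A]
    [Module K A] {x y : A} (h : Commute x y) (n : ℕ) :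
    (n ! : K)⁻¹ • (x + y) ^ n
      = ∑ ab ∈ antidiagonal n, (ab.1 ! : K)⁻¹ • (ab.2 ! : K)⁻¹ • (x ^ ab.1 * y ^ ab.2) := by
  rw [h.add_pow', smul_sum]
  refine Finset.sum_congr rfl fun ab hab => ?_
  rw [← mem_antidiagonal.mp hab, ← Nat.cast_smul_eq_nsmul K, smul_smul, smul_smul,
    Nat.cast_add_choose]
  congr 1
  have := (ab.1 + ab.2).factorial_ne_zero
  field_simp

namespace Moyal

open Finset Nat

section CommRing

variable {R : Type*} [CommRing R] {ι σ τ : Type*}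

noncomputable def slot (s : σ) : MvPolynomial ι R →ₐ[R] MvPolynomial (σ × ι) R :=
  rename (Prod.mk s)

noncomputable def collapse : MvPolynomial (σ × ι) R →ₐ[R] MvPolynomial ι R :=
  rename Prod.snd

noncomputable def relabel (e : σ → τ) : MvPolynomial (σ × ι) R →ₐ[R] MvPolynomial (τ × ι) R :=
  rename (Prod.map e id)

@[simp] theorem collapse_slot (s : σ) (f : MvPolynomial ι R) : collapse (slot s f) = f := by
  rw [collapse, slot, rename_rename]
  exact rename_id_apply f

@[simp] theorem collapse_relabel (e : σ → τ) (x : MvPolynomial (σ × ι) R) :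
    collapse (relabel e x) = collapse x := by
  simp [collapse, relabel, rename_rename, Function.comp_def]

@[simp] theorem relabel_slot (e : σ → τ) (s : σ) (f : MvPolynomial ι R) :
    relabel e (slot s f) = slot (e s) f := by
  simp [relabel, slot, rename_rename, Function.comp_def]

theorem pderiv_slot [DecidableEq σ] (s t : σ) (i : ι) (f : MvPolynomial ι R) :
    pderiv (t, i) (slot s f) = if t = s then slot s (pderiv i f) else 0 := by
  split_ifs with h
  · subst h; exact pderiv_rename (Prod.mk_right_injective t) i f
  · classical
    refine pderiv_eq_zero_of_notMem_vars fun hv => h ?_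
    obtain ⟨j, -, hj⟩ := mem_image.mp (vars_rename _ f hv)
    exact (congr_arg Prod.fst hj).symm

theorem pderiv_relabel [Fintype σ] [Fintype ι] [DecidableEq τ] (e : σ → τ) (s : τ) (i : ι)
    (x : MvPolynomial (σ × ι) R) :
    pderiv (s, i) (relabel e x) = ∑ t ∈ univ.filter (e · = s), relabel e (pderiv (t, i) x) := by
  classical
  rw [relabel, pderiv_rename_eq_sum, sum_filter, sum_filter, Fintype.sum_prod_type]
  refine sum_congr rfl fun t _ => ?_
  by_cases h : e t = s <;> simp [h, Prod.ext_iff]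

variable [Fintype ι]

noncomputable def bidiff (ω : ι → ι → R) (s t : σ) : Module.End R (MvPolynomial (σ × ι) R) :=
  ∑ ij : ι × ι, ω ij.1 ij.2 • ((pderiv (s, ij.1)).toLinearMap * (pderiv (t, ij.2)).toLinearMap)

variable (ω : ι → ι → R)

theorem bidiff_apply (s t : σ) (x : MvPolynomial (σ × ι) R) :
    bidiff ω s t x = ∑ ij : ι × ι, ω ij.1 ij.2 • pderiv (s, ij.1) (pderiv (t, ij.2) x) := by
  simp [bidiff]

theorem bidiff_commute (s t s' t' : σ) : Commute (bidiff ω s t) (bidiff ω s' t') := by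
  have h : ∀ a b : σ × ι, Commute (pderiv a).toLinearMap (pderiv (R := R) b).toLinearMap :=
    fun a b => LinearMap.ext (pderiv_pderiv_comm a b)
  refine .sum_left _ _ _ fun ij _ => .sum_right _ _ _ fun ij' _ => ?_
  refine .smul_left (.smul_right ?_ _) _
  exact ((h _ _).mul_right (h _ _)).mul_left ((h _ _).mul_right (h _ _))

theorem bidiff_pow_mul_slot [DecidableEq σ] {s t u : σ} (hs : s ≠ u) (ht : t ≠ u) (n : ℕ)
    (y : MvPolynomial (σ × ι) R) (q : MvPolynomial ι R) :
    (bidiff ω s t ^ n) (y * slot u q) = (bidiff ω s t ^ n) y * slot u q := by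
  have h : Commute (bidiff ω s t) (LinearMap.mulRight R (slot u q)) := LinearMap.ext fun y => by
    simp [bidiff_apply, pderiv_slot, hs, ht, mul_comm]
  exact LinearMap.congr_fun (h.pow_left n) y

theorem bidiff_slot_mul_slot [DecidableEq σ] {s t : σ} (hst : s ≠ t) (F G : MvPolynomial ι R) :
    bidiff ω s t (slot s F * slot t G)
      = ∑ ij : ι × ι, ω ij.1 ij.2 • (slot s (pderiv ij.1 F) * slot t (pderiv ij.2 G)) := by
  simp [bidiff_apply, pderiv_slot, hst, hst.symm, mul_comm]

theorem bidiff_pow_slot_mul_slot [DecidableEq σ] {s t : σ} (hst : s ≠ t) (n : ℕ)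
    (F G : MvPolynomial ι R) :
    (bidiff ω s t ^ n) (slot s F * slot t G)
      = ∑ p : Fin n → ι × ι, (∏ u, ω (p u).1 (p u).2) •
          (slot s (iterPDeriv (fun u => (p u).1) F) *
            slot t (iterPDeriv (fun u => (p u).2) G)) := by
  induction n generalizing F G with
  | zero => simp [iterPDeriv, Unique.eq_default (α := Fin 0 → ι × ι)]
  | succ n ih =>
    rw [pow_succ, Module.End.mul_apply, bidiff_slot_mul_slot ω hst, map_sum,
      ← (Fin.consEquiv fun _ => ι × ι).sum_comp]
    refine (Finset.sum_congr rfl fun ij _ => ?_).trans (Fintype.sum_prod_type _).symm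
    simp only [map_smul, ih, smul_sum, smul_smul, Fin.prod_univ_succ, iterPDeriv_succ _ F,
      iterPDeriv_succ _ G, Fin.consEquiv_apply, Fin.cons_zero, Fin.cons_succ]

theorem bidiff_relabel [Fintype σ] [DecidableEq τ] (e : σ → τ) (s t : τ)
    (x : MvPolynomial (σ × ι) R) :
    bidiff ω s t (relabel e x) = relabel e
      ((∑ s' ∈ univ.filter (e · = s), ∑ t' ∈ univ.filter (e · = t), bidiff ω s' t') x) := by
  simp only [LinearMap.sum_apply, bidiff_apply, pderiv_relabel, map_sum, map_smul, smul_sum]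
  rw [sum_comm]
  exact (Finset.sum_congr rfl fun _ _ => sum_comm).trans sum_comm

theorem bidiff_pow_relabel [Fintype σ] [DecidableEq τ] (e : σ → τ) (s t : τ) (n : ℕ)
    (x : MvPolynomial (σ × ι) R) :
    (bidiff ω s t ^ n) (relabel e x) = relabel e
      (((∑ s' ∈ univ.filter (e · = s), ∑ t' ∈ univ.filter (e · = t), bidiff ω s' t') ^ n) x) :=
  LinearMap.congr_fun (Module.End.commute_pow_left_of_commute
    (f := (relabel e).toLinearMap) (LinearMap.ext (bidiff_relabel ω e s t)) n) x

end CommRing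

section Field

variable {k : Type*} [Field k] {ι σ τ : Type*}

theorem sum_antidiagonal_collapse_pow_mul_pow [CharZero k]
    {A B : Module.End k (MvPolynomial (σ × ι) k)} (h : Commute A B)
    (x : MvPolynomial (σ × ι) k) (N : ℕ) :
    ∑ ab ∈ antidiagonal N, (ab.1 ! : k)⁻¹ • (ab.2 ! : k)⁻¹ • collapse ((A ^ ab.1 * B ^ ab.2) x)
      = (N ! : k)⁻¹ • collapse (((A + B) ^ N) x) := by
  rw [← map_smul, ← LinearMap.smul_apply, h.inv_factorial_smul_add_pow, LinearMap.sum_apply,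
    map_sum]
  simp only [LinearMap.smul_apply, map_smul]

variable [Fintype ι] (ω : ι → ι → k)

theorem moyalTerm_eq_collapse [DecidableEq σ] {s t : σ} (hst : s ≠ t) (n : ℕ)
    (F G : MvPolynomial ι k) :
    moyalTerm ω n F G = (n ! : k)⁻¹ • collapse ((bidiff ω s t ^ n) (slot s F * slot t G)) := by
  simp [bidiff_pow_slot_mul_slot ω hst, moyalTerm]

theorem slot_moyalTerm [DecidableEq σ] (e : σ → τ) {s t : σ} (hst : s ≠ t) {u : τ}
    (hs : e s = u) (ht : e t = u) (n : ℕ) (F G : MvPolynomial ι k) :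
    slot u (moyalTerm ω n F G)
      = (n ! : k)⁻¹ • relabel e ((bidiff ω s t ^ n) (slot s F * slot t G)) := by
  simp [bidiff_pow_slot_mul_slot ω hst, moyalTerm, hs, ht]

theorem moyalTerm_eq_of_slot_mul_slot_eq_relabel [Fintype σ] (c : σ → Fin 2)
    {F G : MvPolynomial ι k} {y : MvPolynomial (σ × ι) k}
    (h : slot 0 F * slot 1 G = relabel c y) (n : ℕ) :
    moyalTerm ω n F G = (n ! : k)⁻¹ • collapse
      (((∑ s ∈ univ.filter (c · = 0), ∑ t ∈ univ.filter (c · = 1), bidiff ω s t) ^ n) y) := by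
  rw [moyalTerm_eq_collapse ω Fin.zero_ne_one, h, bidiff_pow_relabel, collapse_relabel]

theorem moyalTerm_moyalTerm_left (f g p : MvPolynomial ι k) (a b : ℕ) :
    moyalTerm ω a (moyalTerm ω b f g) p = (a ! : k)⁻¹ • (b ! : k)⁻¹ • collapse
      (((bidiff ω (0 : Fin 3) 2 + bidiff ω 1 2) ^ a * bidiff ω 0 1 ^ b :
        Module.End k (MvPolynomial (Fin 3 × ι) k)) (slot 0 f * slot 1 g * slot 2 p)) := by
  have h : slot (0 : Fin 2) (moyalTerm ω b f g) * slot 1 p = relabel ![0, 0, 1]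
      ((b ! : k)⁻¹ • (bidiff ω (0 : Fin 3) 1 ^ b) (slot 0 f * slot 1 g * slot 2 p)) := by
    rw [bidiff_pow_mul_slot ω (u := 2) (by decide) (by decide), ← smul_mul_assoc, map_mul,
      map_smul, ← slot_moyalTerm ω ![0, 0, 1] (by decide) (u := 0) rfl rfl, relabel_slot]
    rfl
  have hfib : (∑ s ∈ univ.filter (![0, 0, 1] · = (0 : Fin 2)),
      ∑ t ∈ univ.filter (![0, 0, 1] · = (1 : Fin 2)), bidiff ω s t)
        = bidiff ω (0 : Fin 3) 2 + bidiff ω 1 2 := by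
    have h0 : univ.filter (![0, 0, 1] · = (0 : Fin 2)) = {0, 1} := by decide
    have h1 : univ.filter (![0, 0, 1] · = (1 : Fin 2)) = {2} := by decide
    rw [h0, h1, sum_pair (by decide), sum_singleton, sum_singleton]
  rw [moyalTerm_eq_of_slot_mul_slot_eq_relabel ω ![0, 0, 1] h a, hfib, map_smul, map_smul,
    Module.End.mul_apply]

theorem moyalTerm_moyalTerm_right (f g p : MvPolynomial ι k) (a b : ℕ) :
    moyalTerm ω a f (moyalTerm ω b g p) = (a ! : k)⁻¹ • (b ! : k)⁻¹ • collapse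
      (((bidiff ω (0 : Fin 3) 1 + bidiff ω 0 2) ^ a * bidiff ω 1 2 ^ b :
        Module.End k (MvPolynomial (Fin 3 × ι) k)) (slot 0 f * slot 1 g * slot 2 p)) := by
  have h : slot (0 : Fin 2) f * slot 1 (moyalTerm ω b g p) = relabel ![0, 1, 1]
      ((b ! : k)⁻¹ • (bidiff ω (1 : Fin 3) 2 ^ b) (slot 0 f * slot 1 g * slot 2 p)) := by
    rw [mul_assoc, mul_comm (slot (0 : Fin 3) f), bidiff_pow_mul_slot ω (u := 0) (by decide)
      (by decide), ← smul_mul_assoc, map_mul, map_smul,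
      ← slot_moyalTerm ω ![0, 1, 1] (by decide) (u := 1) rfl rfl, relabel_slot, mul_comm]
    rfl
  have hfib : (∑ s ∈ univ.filter (![0, 1, 1] · = (0 : Fin 2)),
      ∑ t ∈ univ.filter (![0, 1, 1] · = (1 : Fin 2)), bidiff ω s t)
        = bidiff ω (0 : Fin 3) 1 + bidiff ω 0 2 := by
    have h0 : univ.filter (![0, 1, 1] · = (0 : Fin 2)) = {0} := by decide
    have h1 : univ.filter (![0, 1, 1] · = (1 : Fin 2)) = {1, 2} := by decide
    rw [h0, h1, sum_singleton, sum_pair (by decide)]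
  rw [moyalTerm_eq_of_slot_mul_slot_eq_relabel ω ![0, 1, 1] h a, hfib, map_smul, map_smul,
    Module.End.mul_apply]

end Field

end Moyal

open Moyal in
/-- For all polynomials `f, g, p` and every `N`,
`Σ_{a+b=N} m_a(m_b(f,g), p) = Σ_{a+b=N} m_a(f, m_b(g,p))`; equivalently, the Moyal star
product `f ⋆ g = Σₙ hⁿ mₙ(f,g)` is associative on `k[Xᵢ][[h]]`. -/
theorem moyal_star_assoc {k : Type*} [Field k] [CharZero k] {ι : Type*} [Fintype ι]
    (ω : ι → ι → k) (f g p : MvPolynomial ι k) (N : ℕ) :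
    ∑ ab ∈ Finset.HasAntidiagonal.antidiagonal N, moyalTerm ω ab.1 (moyalTerm ω ab.2 f g) p
      = ∑ ab ∈ Finset.HasAntidiagonal.antidiagonal N, moyalTerm ω ab.1 f (moyalTerm ω ab.2 g p) := by
  have hleft := (bidiff_commute ω (0 : Fin 3) 2 0 1).add_left (bidiff_commute ω 1 2 0 1)
  have hright := (bidiff_commute ω (0 : Fin 3) 1 1 2).add_left (bidiff_commute ω 0 2 1 2)
  simp only [moyalTerm_moyalTerm_left, moyalTerm_moyalTerm_right]
  rw [sum_antidiagonal_collapse_pow_mul_pow hleft, sum_antidiagonal_collapse_pow_mul_pow hright,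
    add_right_comm, add_comm (bidiff ω 0 2)]
end

section
/- For all multivariate polynomials f, g ∈ k[X_i : i ∈ ι] and every natural number n, if m_n(f,g) ≠ 0 then totalDegree(m_n(f,g)) + 2n ≤ totalDegree(f) + totalDegree(g). Consequently, the increasing filtration on k[X_i : i ∈ ι][[h]] in which h and each variable X_i lie in filtration degree 1 is multiplicative with respect to the Moyal star product f ⋆ g = Σ_{n≥0} hⁿ m_n(f,g). -/
open MvPolynomial

/-!
Each partial derivative lowers the total degree of a nonzero polynomial by at least one, since
`∂ᵢ` sends the monomial `X^(m + eᵢ)` to a multiple of `X^m`. Hence each summand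
`(∂_{i₁}⋯∂_{iₙ} f) · (∂_{j₁}⋯∂_{jₙ} g)` of `m_n(f,g)` has total degree at most
`deg f + deg g - 2n`, and so does every monomial of their sum.
-/

section TotalDegree

variable {R σ : Type*} [CommSemiring R]

lemma totalDegree_add_le_of_forall_mem_support {p : MvPolynomial σ R} (hp : p ≠ 0) {c D : ℕ}
    (h : ∀ m ∈ p.support, (m.sum fun _ e => e) + c ≤ D) : p.totalDegree + c ≤ D := by
  obtain ⟨m, hm, hmax⟩ :=
    Finset.exists_mem_eq_sup _ (support_nonempty.2 hp) fun m : σ →₀ ℕ => m.sum fun _ e => e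
  rw [totalDegree, hmax]
  exact h m hm

lemma totalDegree_pderiv_add_one_le {i : σ} {f : MvPolynomial σ R} (h : pderiv i f ≠ 0) :
    (pderiv i f).totalDegree + 1 ≤ f.totalDegree := by
  classical
  refine totalDegree_add_le_of_forall_mem_support h fun m hm => ?_
  rw [mem_support_iff, coeff_pderiv] at hm
  have hshift : m + Finsupp.single i 1 ∈ f.support := mem_support_iff.2 (left_ne_zero_of_mul hm)
  simpa [Finsupp.sum_add_index'] using le_totalDegree hshift

lemma totalDegree_foldl_pderiv_add_length_le (l : List σ) {f : MvPolynomial σ R}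
    (h : l.foldl (fun g i => pderiv i g) f ≠ 0) :
    (l.foldl (fun g i => pderiv i g) f).totalDegree + l.length ≤ f.totalDegree := by
  induction l using List.reverseRecOn with
  | nil => simp
  | append_singleton l i ih =>
    simp only [List.foldl_append, List.foldl_cons, List.foldl_nil] at h ⊢
    have hl : l.foldl (fun g i => pderiv i g) f ≠ 0 := fun h0 => h (by rw [h0, map_zero])
    have hstep := totalDegree_pderiv_add_one_le h
    have hrest := ih hl
    rw [List.length_append, List.length_singleton]
    omega

end TotalDegree

section Moyal

variable {k ι : Type*} [CommRing k]

lemma totalDegree_iterPDeriv_add_le {n : ℕ} (v : Fin n → ι)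
    {f : MvPolynomial ι k} (h : iterPDeriv v f ≠ 0) :
    (iterPDeriv v f).totalDegree + n ≤ f.totalDegree := by
  simpa only [iterPDeriv, List.length_ofFn] using
    totalDegree_foldl_pderiv_add_length_le (List.ofFn v) h

lemma totalDegree_iterPDeriv_mul_add_le {n : ℕ} (v w : Fin n → ι)
    {f g : MvPolynomial ι k} (h : iterPDeriv v f * iterPDeriv w g ≠ 0) :
    (iterPDeriv v f * iterPDeriv w g).totalDegree + 2 * n ≤ f.totalDegree + g.totalDegree := by
  have hf := totalDegree_iterPDeriv_add_le v (left_ne_zero_of_mul h)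
  have hg := totalDegree_iterPDeriv_add_le w (right_ne_zero_of_mul h)
  have hmul := totalDegree_mul (iterPDeriv v f) (iterPDeriv w g)
  omega

end Moyal

theorem moyalTerm_totalDegree_general {k : Type*} [Field k] {ι : Type*} [Fintype ι]
    (ω : ι → ι → k) (f g : MvPolynomial ι k) (n : ℕ) (h : moyalTerm ω n f g ≠ 0) :
    (moyalTerm ω n f g).totalDegree + 2 * n ≤ f.totalDegree + g.totalDegree := by
  classical
  refine totalDegree_add_le_of_forall_mem_support h fun m hm => ?_
  obtain ⟨p, -, hp⟩ := Finset.mem_biUnion.1 (support_sum (support_smul hm))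
  have hprod := support_smul hp
  have hne : iterPDeriv (fun t => (p t).1) f * iterPDeriv (fun t => (p t).2) g ≠ 0 :=
    ne_zero_iff.2 ⟨m, mem_support_iff.1 hprod⟩
  have hm_le := le_totalDegree hprod
  have hprod_le := totalDegree_iterPDeriv_mul_add_le _ _ hne
  omega

/-- If `m_n(f,g) ≠ 0` then `totalDegree (m_n(f,g)) + 2n ≤ totalDegree f + totalDegree g`;
consequently the increasing filtration of `k[Xᵢ][[h]]` in which `h` and the variables `Xᵢ`
have degree `1` is multiplicative for the Moyal star product `f ⋆ g = Σₙ hⁿ mₙ(f,g)`. -/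
theorem moyalTerm_totalDegree {k : Type*} [Field k] [CharZero k] {ι : Type*} [Fintype ι]
    (ω : ι → ι → k) (f g : MvPolynomial ι k) (n : ℕ) (h : moyalTerm ω n f g ≠ 0) :
    (moyalTerm ω n f g).totalDegree + 2 * n ≤ f.totalDegree + g.totalDegree :=
  moyalTerm_totalDegree_general ω f g n h
end

section
/- The operator D satisfies D ∘ D = 0, and the cohomology of the complex (Ω^•, D) of polynomial differential forms is concentrated in top degree n, where it is a one-dimensional k-vector space spanned by the class of dx₁∧dx₂∧⋯∧dx_n. -/
open MvPolynomial

/-- The space `Ω^• = k[x₁,…,xₙ] ⊗ Λ(dx₁,…,dxₙ)` of polynomial differential forms on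
affine `n`-space; a form is recorded by its coefficient family: to a subset
`S ⊆ {1,…,n}` it assigns the polynomial coefficient of `dx_S` (the wedge of the `dxᵢ`,
`i ∈ S`, in increasing order). A `p`-form is supported on subsets of cardinality `p`. -/
abbrev PolyForms (k : Type*) [CommRing k] (n : ℕ) := Finset (Fin n) → MvPolynomial (Fin n) k

/-- A form is homogeneous of degree `p` if all its nonzero components sit on subsets of
cardinality `p`, i.e. it lies in `Ω^p`. -/
def FormDegree {k : Type*} [CommRing k] {n : ℕ} (p : ℕ) (a : PolyForms k n) : Prop :=
  ∀ S : Finset (Fin n), a S ≠ 0 → S.card = p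

/-- The twisted de Rham differential `D(α) = dα − 2·(Σᵢ xᵢ dxᵢ) ∧ α`, written in terms
of coefficient families: `dxᵢ ∧ dx_{T∖{i}} = (−1)^{#{j ∈ T∖{i} : j < i}} dx_T`. -/
noncomputable def twistedDeRham {k : Type*} [CommRing k] {n : ℕ}
    (a : PolyForms k n) : PolyForms k n :=
  fun T => ∑ i ∈ T,
    ((-1 : k) ^ ((T.erase i).filter (fun j => j < i)).card) •
      (MvPolynomial.pderiv i (a (T.erase i))
        - 2 * (MvPolynomial.X i * a (T.erase i)))

/-- The top form `dx₁∧dx₂∧⋯∧dxₙ`. -/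
noncomputable def topForm (k : Type*) [CommRing k] (n : ℕ) : PolyForms k n :=
  fun S => if S = Finset.univ then 1 else 0

/-!
Write `D = ∑ᵢ dxᵢ ∧ (∂ᵢ - 2xᵢ)`. The operators `∂ᵢ - 2xᵢ` commute, so `D² = 0`. For
`h = ∑ᵢ ι_{∂ᵢ} ∂ᵢ`, the relations `dxᵢ ∧ ι_{∂ⱼ} + ι_{∂ⱼ} dxᵢ ∧ = δᵢⱼ` and
`[∂ᵢ - 2xᵢ, ∂ⱼ] = 2δᵢⱼ` give `Dh + hD = Δ - 2x·∇ - 2c` on the coefficient of `dx_S`, where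
`c = #Sᶜ`. On homogeneous polynomials of degree `m` this operator is `-2(m + c)` plus the
degree-lowering `Δ`, so its kernel consists of constants and its image together with the
constants is everything. Hence a closed form is `a • dx₁∧⋯∧dxₙ + (Dh + hD) w`; as `Dh + hD`
commutes with `D`, the form `Dw` lies in its kernel, so it has constant coefficients, `hDw = 0`,
and the form is `a • dx₁∧⋯∧dxₙ + D(hw)`. Finally, the Gaussian integral `f ↦ ∫ f e^{-|x|²}`
vanishes on every `(∂ᵢ - 2xᵢ) g`, hence on the top coefficient of every exact form, but not on `1`.
-/

open Finset

namespace TwistedDeRham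

lemma mul_add_mul_of_commute {A : Type*} [Ring A] {e c p q : A} (hp : p * c = c * p)
    (hq : q * e = e * q) :
    e * p * (c * q) + c * q * (e * p) = (e * c + c * e) * (p * q) - c * e * (p * q - q * p) := by
  calc _ = e * (p * c) * q + c * (q * e) * p := by noncomm_ring
    _ = _ := by rw [hp, hq]; noncomm_ring

lemma compLeft_mul {R M : Type*} [Semiring R] [AddCommMonoid M] [Module R M]
    (φ ψ : Module.End R M) (I : Type*) : (φ * ψ).compLeft I = φ.compLeft I * ψ.compLeft I :=
  rfl

section Polynomial

variable {R : Type*} [CommRing R] {σ : Type*}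

lemma pderiv_comm (i j : σ) (f : MvPolynomial σ R) :
    pderiv i (pderiv j f) = pderiv j (pderiv i f) := by
  classical
  have h : ⁅pderiv i, pderiv j⁆ = (0 : Derivation R (MvPolynomial σ R) (MvPolynomial σ R)) :=
    derivation_ext fun l => by
      rw [Derivation.commutator_apply]; simp [pderiv_X, Pi.single_apply, apply_ite]
  rw [← sub_eq_zero, ← Derivation.commutator_apply, h, Derivation.zero_apply]

lemma pderiv_two (i : σ) : pderiv i (2 : MvPolynomial σ R) = 0 := by
  exact_mod_cast (pderiv i).map_natCast 2

lemma homogeneousComponent_totalDegree_ne_zero {f : MvPolynomial σ R} (hf : f ≠ 0) :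
    homogeneousComponent f.totalDegree f ≠ 0 := by
  obtain ⟨d, hd, hdeg⟩ := exists_mem_eq_sup f.support (support_nonempty.2 hf)
    (fun d => d.sum fun _ e => e)
  intro h
  have := congrArg (coeff d) h
  rw [coeff_homogeneousComponent, if_pos (by exact hdeg.symm), coeff_zero] at this
  exact mem_support_iff.1 hd this

/-- `∂ᵢ - 2xᵢ = e^{|x|²} ∘ ∂ᵢ ∘ e^{-|x|²}`. -/
noncomputable def twistedPderiv (i : σ) : Module.End R (MvPolynomial σ R) where
  toFun f := pderiv i f - 2 * (X i * f)
  map_add' f g := by rw [map_add, mul_add, mul_add]; abel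
  map_smul' r f := by simp [smul_sub]

lemma twistedPderiv_apply (i : σ) (f : MvPolynomial σ R) :
    twistedPderiv i f = pderiv i f - 2 * (X i * f) := rfl

section DecidableEq

variable [DecidableEq σ]

lemma twistedPderiv_comm (i j : σ) :
    twistedPderiv (R := R) i * twistedPderiv j = twistedPderiv j * twistedPderiv i := by
  refine LinearMap.ext fun f => ?_
  have hX : pderiv i (X j : MvPolynomial σ R) = pderiv j (X i) := by
    simp only [pderiv_X, Pi.single_apply, eq_comm]
  simp only [Module.End.mul_apply, twistedPderiv_apply, map_sub, pderiv_two, Derivation.leibniz,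
    smul_eq_mul, pderiv_comm i j, hX]
  ring

lemma pderiv_twistedPderiv (i j : σ) (f : MvPolynomial σ R) :
    pderiv j (twistedPderiv i f) = twistedPderiv i (pderiv j f) - if i = j then 2 • f else 0 := by
  simp only [twistedPderiv_apply, map_sub, pderiv_two, Derivation.leibniz, smul_eq_mul,
    pderiv_comm i j, pderiv_X, Pi.single_apply]
  split_ifs <;> ring

end DecidableEq

variable [Fintype σ]

noncomputable def laplacian (f : MvPolynomial σ R) : MvPolynomial σ R :=
  ∑ i, pderiv i (pderiv i f)

/-- `Δ - 2x·∇ - 2c`. -/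
noncomputable def hermiteOp (c : ℕ) : Module.End R (MvPolynomial σ R) :=
  ∑ i, twistedPderiv i * (pderiv i).toLinearMap - (2 * c) • 1

lemma hermiteOp_apply (c : ℕ) (f : MvPolynomial σ R) :
    hermiteOp c f = ∑ i, twistedPderiv i (pderiv i f) - (2 * c) • f := by
  simp only [hermiteOp, LinearMap.sub_apply, LinearMap.sum_apply, Module.End.mul_apply,
    LinearMap.smul_apply, Module.End.one_apply]
  rfl

lemma hermiteOp_C (c : ℕ) (r : R) : hermiteOp c (C r : MvPolynomial σ R) = -((2 * c) • C r) := by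
  simp [hermiteOp_apply]

lemma hermiteOp_of_isHomogeneous {F : MvPolynomial σ R} {m : ℕ} (hF : F.IsHomogeneous m)
    (c : ℕ) : hermiteOp c F = laplacian F - (2 * (m + c)) • F := by
  simp only [hermiteOp_apply, twistedPderiv_apply, sum_sub_distrib, ← mul_sum,
    hF.sum_X_mul_pderiv, laplacian, nsmul_eq_mul]
  push_cast
  ring

lemma isHomogeneous_laplacian {F : MvPolynomial σ R} {m : ℕ} (hF : F.IsHomogeneous m) :
    (laplacian F).IsHomogeneous (m - 2) :=
  IsHomogeneous.sum _ _ _ fun _ _ => hF.pderiv.pderiv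

lemma homogeneousComponent_totalDegree_hermiteOp {f : MvPolynomial σ R} (hf : f.totalDegree ≠ 0)
    (c : ℕ) : homogeneousComponent f.totalDegree (hermiteOp c f) =
      -((2 * (f.totalDegree + c)) • homogeneousComponent f.totalDegree f) := by
  set M := f.totalDegree
  have term : ∀ m ∈ range (M + 1), homogeneousComponent M (hermiteOp c (homogeneousComponent m f))
      = if M = m then -((2 * (M + c)) • homogeneousComponent M f) else 0 := by
    intro m hm
    have hFm := homogeneousComponent_isHomogeneous m f
    rw [hermiteOp_of_isHomogeneous hFm, map_sub, map_nsmul,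
      homogeneousComponent_of_mem ((mem_homogeneousSubmodule _ _).2 (isHomogeneous_laplacian hFm)),
      homogeneousComponent_of_mem ((mem_homogeneousSubmodule _ _).2 hFm),
      if_neg (by rw [mem_range] at hm; omega)]
    split_ifs with hmM
    · subst hmM; rw [zero_sub]
    · rw [smul_zero, sub_zero]
  conv_lhs => rw [← sum_homogeneousComponent f]
  rw [map_sum, map_sum, sum_congr rfl term, sum_ite_eq, if_pos (self_mem_range_succ M)]

end Polynomial

section CharZero

variable {k : Type*} [Field k] [CharZero k] {σ : Type*} [Fintype σ]

theorem range_hermiteOp_sup_span_one (c : ℕ) :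
    LinearMap.range (hermiteOp c) ⊔ Submodule.span k {(1 : MvPolynomial σ k)} = ⊤ := by
  set V := LinearMap.range (hermiteOp c) ⊔ Submodule.span k {(1 : MvPolynomial σ k)}
  have hom : ∀ m (F : MvPolynomial σ k), F.IsHomogeneous m → F ∈ V := by
    intro m
    induction m using Nat.strong_induction_on with
    | _ m ih =>
      intro F hF
      rcases Nat.eq_zero_or_pos m with rfl | hm
      · have hC := totalDegree_eq_zero_iff_eq_C.1 ((totalDegree_zero_iff_isHomogeneous σ).2 hF)
        refine Submodule.mem_sup_right (Submodule.mem_span_singleton.2 ⟨coeff 0 F, ?_⟩)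
        rw [smul_eq_C_mul, mul_one, ← hC]
      · set s : k := ((2 * (m + c) : ℕ) : k)⁻¹
        have hs : ((2 * (m + c) : ℕ) : k) ≠ 0 := Nat.cast_ne_zero.2 (by omega)
        have hF' : F = hermiteOp c (-(s • F)) + s • laplacian F := by
          rw [map_neg, map_smul, hermiteOp_of_isHomogeneous hF, smul_sub,
            ← Nat.cast_smul_eq_nsmul k, smul_smul, inv_mul_cancel₀ hs, one_smul]
          abel
        rw [hF']
        exact V.add_mem (Submodule.mem_sup_left (LinearMap.mem_range_self _ _))
          (V.smul_mem _ (ih _ (by omega) _ (isHomogeneous_laplacian hF)))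
  refine eq_top_iff.2 fun f _ => ?_
  rw [← sum_homogeneousComponent f]
  exact V.sum_mem fun m _ => hom m _ (homogeneousComponent_isHomogeneous m f)

theorem exists_eq_hermiteOp_add_C (c : ℕ) (f : MvPolynomial σ k) :
    ∃ g r, f = hermiteOp c g + C r ∧ (c ≠ 0 → r = 0) := by
  have hf : f ∈ LinearMap.range (hermiteOp c) ⊔ Submodule.span k {1} := by
    rw [range_hermiteOp_sup_span_one]; exact Submodule.mem_top
  obtain ⟨_, ⟨g, rfl⟩, _, hr, rfl⟩ := Submodule.mem_sup.1 hf
  obtain ⟨r, rfl⟩ := Submodule.mem_span_singleton.1 hr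
  rw [smul_eq_C_mul, mul_one]
  rcases eq_or_ne c 0 with rfl | hc
  · exact ⟨g, r, rfl, fun h => absurd rfl h⟩
  · have hs : ((2 * c : ℕ) : k) ≠ 0 := Nat.cast_ne_zero.2 (by omega)
    refine ⟨g - ((2 * c : ℕ) : k)⁻¹ • C r, 0, ?_, fun _ => rfl⟩
    rw [map_sub, map_smul, hermiteOp_C, ← Nat.cast_smul_eq_nsmul k, smul_neg, smul_smul,
      inv_mul_cancel₀ hs, one_smul, C_0, add_zero, sub_neg_eq_add]

theorem eq_C_of_hermiteOp_eq_zero {c : ℕ} {f : MvPolynomial σ k} (h : hermiteOp c f = 0) :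
    f = C (coeff 0 f) := by
  by_contra hne
  have hM : f.totalDegree ≠ 0 := fun h0 => hne (totalDegree_eq_zero_iff_eq_C.1 h0)
  have hf : f ≠ 0 := by rintro rfl; simp at hne
  have key := homogeneousComponent_totalDegree_hermiteOp hM c
  rw [h, map_zero, eq_comm, neg_eq_zero, ← Nat.cast_smul_eq_nsmul k, smul_eq_zero] at key
  exact key.elim (Nat.cast_ne_zero.2 (by omega)) (homogeneousComponent_totalDegree_ne_zero hf)

end CharZero

section Gaussian

variable (k : Type*) [Field k]

/-- `∫ xᵗ e^{-x²} dx / √π`. -/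
def gaussianMoment : ℕ → k
  | 0 => 1
  | 1 => 0
  | t + 2 => (t + 1) / 2 * gaussianMoment t

variable {k} {σ : Type*} [Fintype σ]

/-- `f ↦ ∫ f e^{-|x|²} dx / π^{#σ/2}`. -/
noncomputable def gaussianMean : MvPolynomial σ k →ₗ[k] k :=
  Finsupp.linearCombination k (fun d : σ →₀ ℕ => ∏ i, gaussianMoment k (d i)) ∘ₗ
    (AddMonoidAlgebra.coeffLinearEquiv k).toLinearMap

lemma gaussianMean_monomial (d : σ →₀ ℕ) (a : k) :
    gaussianMean (monomial d a) = a * ∏ i, gaussianMoment k (d i) := by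
  rw [← single_eq_monomial]
  exact (Finsupp.linearCombination_single k a d).trans (smul_eq_mul _ _)

lemma gaussianMean_C (a : k) : gaussianMean (C a : MvPolynomial σ k) = a := by
  rw [← monomial_zero', gaussianMean_monomial]
  simp [gaussianMoment]

variable [NeZero (2 : k)]

/-- Integration by parts: `∫ 2x · xᵗ e^{-x²} = ∫ t xᵗ⁻¹ e^{-x²}`. -/
lemma two_mul_gaussianMoment_succ (t : ℕ) :
    2 * gaussianMoment k (t + 1) = t * gaussianMoment k (t - 1) := by
  cases t with
  | zero => simp [gaussianMoment]
  | succ t =>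
    simp only [gaussianMoment, add_tsub_cancel_right, Nat.cast_succ]
    field_simp

lemma gaussianMean_twistedPderiv [DecidableEq σ] (i : σ) (f : MvPolynomial σ k) :
    gaussianMean (twistedPderiv i f) = 0 := by
  suffices h : gaussianMean ∘ₗ twistedPderiv i = 0 from LinearMap.congr_fun h f
  refine linearMap_ext fun d => LinearMap.ext_ring ?_
  have hprod : ∀ e : σ →₀ ℕ, (∀ j ≠ i, e j = d j) → ∏ j, gaussianMoment k (e j) =
      gaussianMoment k (e i) * ∏ j ∈ univ.erase i, gaussianMoment k (d j) := fun e he => by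
    rw [← mul_prod_erase univ _ (mem_univ i)]
    exact congrArg _ (prod_congr rfl fun j hj => by rw [he j (ne_of_mem_erase hj)])
  simp only [LinearMap.comp_apply, LinearMap.zero_apply, twistedPderiv_apply, map_sub,
    pderiv_monomial, X, monomial_mul, two_mul, map_add, gaussianMean_monomial]
  rw [hprod _ fun j hj => by simp [hj.symm], hprod _ fun j hj => by simp [hj.symm]]
  simp only [Finsupp.tsub_apply, Finsupp.add_apply, Finsupp.single_eq_same, add_comm 1]
  linear_combination (-∏ j ∈ univ.erase i, gaussianMoment k (d j)) *
    two_mul_gaussianMoment_succ (k := k) (d i)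

end Gaussian

section Exterior

variable {R M : Type*} [CommRing R] [AddCommGroup M] [Module R M] {n : ℕ}

variable (R) in
/-- The sign in `dxᵢ ∧ dx_{T∖{i}} = wedgeSign R i T • dx_T`. -/
def wedgeSign (i : Fin n) (T : Finset (Fin n)) : R :=
  (-1) ^ #{j ∈ T.erase i | j < i}

lemma wedgeSign_mul_self (i : Fin n) (T : Finset (Fin n)) :
    wedgeSign R i T * wedgeSign R i T = 1 := by
  rw [wedgeSign, ← pow_add, ← two_mul, pow_mul, neg_one_sq, one_pow]

lemma wedgeSign_of_mem {i j : Fin n} {T : Finset (Fin n)} (hj : j ∈ T) (hji : j ≠ i) :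
    wedgeSign R i T = (if j < i then -1 else 1) * wedgeSign R i (T.erase j) := by
  have hT : T.erase i = insert j ((T.erase j).erase i) := by
    rw [erase_right_comm, insert_erase (mem_erase.2 ⟨hji, hj⟩)]
  rw [wedgeSign, wedgeSign, hT, filter_insert]
  split_ifs
  · rw [card_insert_of_notMem (by simp), pow_succ, mul_comm]
  · rw [one_mul]

lemma wedgeSign_mul_wedgeSign {i j : Fin n} {T : Finset (Fin n)} (hi : i ∈ T) (hj : j ∈ T)
    (hij : i ≠ j) : wedgeSign R i T * wedgeSign R j (T.erase i) =
      -(wedgeSign R j T * wedgeSign R i (T.erase j)) := by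
  rw [wedgeSign_of_mem (i := i) hj hij.symm, wedgeSign_of_mem (i := j) hi hij]
  rcases hij.lt_or_gt with h | h <;> simp only [h, h.not_gt, if_true, if_false] <;> ring

lemma wedgeSign_mul_wedgeSign_insert {i j : Fin n} {T : Finset (Fin n)} (hi : i ∈ T)
    (hj : j ∉ T) : wedgeSign R i T * wedgeSign R j (insert j (T.erase i)) =
      -(wedgeSign R j (insert j T) * wedgeSign R i (insert j T)) := by
  have hij : i ≠ j := ne_of_mem_of_not_mem hi hj
  have h := wedgeSign_mul_wedgeSign (R := R) (mem_insert_of_mem hi) (mem_insert_self j T) hij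
  rw [erase_insert_of_ne hij.symm, erase_insert hj] at h
  linear_combination (wedgeSign R i (insert j T) * wedgeSign R i T) * h
    - (wedgeSign R i T * wedgeSign R j (insert j (T.erase i))) *
      wedgeSign_mul_self (R := R) i (insert j T)
    - (wedgeSign R j (insert j T) * wedgeSign R i (insert j T)) * wedgeSign_mul_self (R := R) i T

variable (R) in
/-- `α ↦ dxᵢ ∧ α` on coefficient families. -/
def wedge (i : Fin n) : Module.End R (Finset (Fin n) → M) where
  toFun a T := if i ∈ T then wedgeSign R i T • a (T.erase i) else 0
  map_add' a b := funext fun T => by by_cases h : i ∈ T <;> simp [h, smul_add]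
  map_smul' r a := funext fun T => by by_cases h : i ∈ T <;> simp [h, smul_comm r]

variable (R) in
/-- `α ↦ ι_{∂ᵢ} α` on coefficient families. -/
def contract (i : Fin n) : Module.End R (Finset (Fin n) → M) where
  toFun a S := if i ∈ S then 0 else wedgeSign R i (insert i S) • a (insert i S)
  map_add' a b := funext fun S => by by_cases h : i ∈ S <;> simp [h, smul_add]
  map_smul' r a := funext fun S => by by_cases h : i ∈ S <;> simp [h, smul_comm r]

@[simp]
lemma wedge_apply (i : Fin n) (a : Finset (Fin n) → M) (T : Finset (Fin n)) :
    wedge R i a T = if i ∈ T then wedgeSign R i T • a (T.erase i) else 0 := rfl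

@[simp]
lemma contract_apply (i : Fin n) (a : Finset (Fin n) → M) (S : Finset (Fin n)) :
    contract R i a S = if i ∈ S then 0 else wedgeSign R i (insert i S) • a (insert i S) :=
  rfl

lemma contract_wedge_apply (i : Fin n) (a : Finset (Fin n) → M) (S : Finset (Fin n)) :
    contract R i (wedge R i a) S = if i ∈ S then 0 else a S := by
  by_cases h : i ∈ S <;> simp [h, smul_smul, wedgeSign_mul_self]

lemma wedge_contract_apply (i : Fin n) (a : Finset (Fin n) → M) (T : Finset (Fin n)) :
    wedge R i (contract R i a) T = if i ∈ T then a T else 0 := by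
  by_cases h : i ∈ T <;> simp [h, smul_smul, wedgeSign_mul_self]

lemma sum_contract_wedge_apply (a : Finset (Fin n) → M) (S : Finset (Fin n)) :
    ∑ i, contract R i (wedge R i a) S = #Sᶜ • a S := by
  simp only [contract_wedge_apply]
  rw [sum_ite, sum_const_zero, zero_add, sum_const, filter_not, compl_eq_univ_sdiff]
  simp

lemma wedge_mul_self (i : Fin n) :
    (wedge R i * wedge R i : Module.End R (Finset (Fin n) → M)) = 0 :=
  LinearMap.ext fun a => funext fun T => by simp

lemma wedge_anticomm (i j : Fin n) :
    (wedge R i * wedge R j + wedge R j * wedge R i : Module.End R (Finset (Fin n) → M)) = 0 := by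
  rcases eq_or_ne i j with rfl | hij
  · rw [wedge_mul_self, add_zero]
  refine LinearMap.ext fun a => funext fun T => ?_
  simp only [LinearMap.add_apply, Module.End.mul_apply, Pi.add_apply, wedge_apply, mem_erase,
    LinearMap.zero_apply, Pi.zero_apply]
  by_cases hi : i ∈ T <;> by_cases hj : j ∈ T <;> simp only [hi, hj, hij, hij.symm, Ne,
    not_false_eq_true, and_self, and_false, if_true, if_false, smul_zero, add_zero]
  rw [smul_smul, smul_smul, wedgeSign_mul_wedgeSign hi hj hij, neg_smul, erase_right_comm,
    neg_add_cancel]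

lemma wedge_contract_anticomm (i j : Fin n) :
    (wedge R i * contract R j + contract R j * wedge R i : Module.End R (Finset (Fin n) → M)) =
      if i = j then 1 else 0 := by
  refine LinearMap.ext fun a => funext fun T => ?_
  rcases eq_or_ne i j with rfl | hij
  · simp only [LinearMap.add_apply, Module.End.mul_apply, Pi.add_apply, wedge_contract_apply,
      contract_wedge_apply, if_true, Module.End.one_apply]
    split_ifs <;> simp
  simp only [LinearMap.add_apply, Module.End.mul_apply, Pi.add_apply, wedge_apply, contract_apply,
    mem_erase, mem_insert, if_neg hij, LinearMap.zero_apply, Pi.zero_apply]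
  by_cases hi : i ∈ T <;> by_cases hj : j ∈ T <;> simp only [hi, hj, hij, hij.symm, Ne,
    not_false_eq_true, and_self, and_false, or_false, or_true, if_true, if_false, smul_zero,
    add_zero]
  rw [smul_smul, smul_smul, wedgeSign_mul_wedgeSign_insert hi hj, neg_smul,
    erase_insert_of_ne hij.symm, neg_add_cancel]

lemma wedge_mul_compLeft (i : Fin n) (φ : Module.End R M) :
    wedge R i * φ.compLeft (Finset (Fin n)) = φ.compLeft _ * wedge R i :=
  LinearMap.ext fun a => funext fun T => by by_cases h : i ∈ T <;> simp [h]

lemma contract_mul_compLeft (i : Fin n) (φ : Module.End R M) :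
    contract R i * φ.compLeft (Finset (Fin n)) = φ.compLeft _ * contract R i :=
  LinearMap.ext fun a => funext fun T => by by_cases h : i ∈ T <;> simp [h]

end Exterior

section DeRham

variable {R : Type*} [CommRing R] {n : ℕ}

variable (R n) in
noncomputable def twistedDeRhamₗ : Module.End R (PolyForms R n) :=
  ∑ i, wedge R i * (twistedPderiv i).compLeft _

variable (R n) in
noncomputable def deRhamHomotopy : Module.End R (PolyForms R n) :=
  ∑ i, contract R i * (pderiv i).toLinearMap.compLeft _

lemma twistedDeRhamₗ_apply (a : PolyForms R n) : twistedDeRhamₗ R n a = twistedDeRham a := by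
  funext T
  simp only [twistedDeRhamₗ, LinearMap.sum_apply, Finset.sum_apply, Module.End.mul_apply,
    wedge_apply, LinearMap.compLeft_apply, Function.comp_apply, twistedPderiv_apply]
  rw [sum_ite_mem, univ_inter]
  rfl

lemma twistedDeRham_topForm : twistedDeRham (topForm R n) = 0 :=
  funext fun T => sum_eq_zero fun i hi => by
    have : T.erase i ≠ univ := fun h => notMem_erase i T (h ▸ mem_univ i)
    simp [topForm, this]

theorem twistedDeRhamₗ_mul_self : twistedDeRhamₗ R n * twistedDeRhamₗ R n = 0 := by
  let P (i : Fin n) : Module.End R (PolyForms R n) := (twistedPderiv i).compLeft _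
  have key : ∀ i j, wedge R i * P i * (wedge R j * P j) = wedge R i * wedge R j * (P i * P j) :=
    fun i j => by rw [mul_assoc, ← mul_assoc (P i), ← wedge_mul_compLeft, mul_assoc, mul_assoc]
  have hP : ∀ i j, P i * P j = P j * P i := fun i j => by
    simp only [P, ← compLeft_mul]; rw [twistedPderiv_comm]
  rw [twistedDeRhamₗ, sum_mul_sum, ← Fintype.sum_prod_type']
  -- the terms `(i, j)` and `(j, i)` cancel, and the diagonal ones vanish
  refine sum_ninvolution Prod.swap (fun ⟨i, j⟩ => ?_) (fun ⟨i, j⟩ h => ?_) (fun _ => mem_univ _)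
    Prod.swap_swap
  · simp only [Prod.swap_prod_mk]
    rw [key, key, hP j i, ← add_mul, wedge_anticomm, zero_mul]
  · intro hs
    obtain rfl : j = i := congrArg Prod.fst hs
    exact h (by rw [key, wedge_mul_self, zero_mul])

theorem deRhamHomotopy_anticomm :
    twistedDeRhamₗ R n * deRhamHomotopy R n + deRhamHomotopy R n * twistedDeRhamₗ R n =
      ∑ i, (twistedPderiv i * (pderiv i).toLinearMap).compLeft _ -
        2 • ∑ i, contract R i * wedge R i := by
  let P (i : Fin n) : Module.End R (PolyForms R n) := (twistedPderiv i).compLeft _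
  let Q (i : Fin n) : Module.End R (PolyForms R n) := (pderiv i).toLinearMap.compLeft _
  have hPQ : ∀ i j, P i * Q j - Q j * P i = if i = j then 2 • 1 else 0 := fun i j =>
    LinearMap.ext fun a => funext fun S => by
      split_ifs <;> simp [P, Q, pderiv_twistedPderiv, *]
  have term : ∀ i j, wedge R i * P i * (contract R j * Q j) + contract R j * Q j * (wedge R i * P i)
      = if i = j then P i * Q i - 2 • (contract R i * wedge R i) else 0 := fun i j => by
    rw [mul_add_mul_of_commute (contract_mul_compLeft _ _).symm (wedge_mul_compLeft _ _).symm,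
      wedge_contract_anticomm, hPQ]
    split_ifs with h
    · subst h; rw [one_mul, mul_smul_comm, mul_one]
    · rw [zero_mul, mul_zero, sub_zero]
  change (∑ i, wedge R i * P i) * (∑ j, contract R j * Q j) +
      (∑ j, contract R j * Q j) * (∑ i, wedge R i * P i) =
    ∑ i, P i * Q i - 2 • ∑ i, contract R i * wedge R i
  rw [sum_mul_sum, sum_mul_sum, sum_comm (s := univ) (t := univ)
    (f := fun j i => contract R j * Q j * (wedge R i * P i)), ← sum_add_distrib]
  simp only [← sum_add_distrib, term, sum_ite_eq, mem_univ, if_true, sum_sub_distrib, smul_sum]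

theorem deRhamHomotopy_anticomm_apply (w : PolyForms R n) (S : Finset (Fin n)) :
    (twistedDeRhamₗ R n * deRhamHomotopy R n + deRhamHomotopy R n * twistedDeRhamₗ R n) w S =
      hermiteOp #Sᶜ (w S) := by
  simp only [deRhamHomotopy_anticomm, LinearMap.sub_apply, LinearMap.smul_apply,
    LinearMap.sum_apply, Pi.sub_apply, Pi.smul_apply, Finset.sum_apply, Module.End.mul_apply,
    sum_contract_wedge_apply, hermiteOp_apply, mul_nsmul']
  rfl

lemma commute_twistedDeRhamₗ_anticomm :
    Commute (twistedDeRhamₗ R n)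
      (twistedDeRhamₗ R n * deRhamHomotopy R n + deRhamHomotopy R n * twistedDeRhamₗ R n) := by
  rw [Commute, SemiconjBy, mul_add, add_mul, ← mul_assoc, twistedDeRhamₗ_mul_self, zero_mul,
    zero_add, mul_assoc, mul_assoc, twistedDeRhamₗ_mul_self, mul_zero, add_zero]

lemma deRhamHomotopy_eq_zero_of_forall_eq_C {b : PolyForms R n}
    (hb : ∀ S, b S = C (coeff 0 (b S))) : deRhamHomotopy R n b = 0 := by
  have h : ∀ i, (pderiv i).toLinearMap.compLeft (Finset (Fin n)) b = 0 := fun i =>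
    funext fun S => by rw [LinearMap.compLeft_apply, Function.comp_apply, hb S]; exact pderiv_C
  simp [deRhamHomotopy, LinearMap.sum_apply, h]

end DeRham

section Cohomology

variable {k : Type*} [Field k] {n : ℕ}

lemma gaussianMean_topForm_univ : gaussianMean (topForm k n univ) = 1 := by
  rw [topForm, if_pos rfl, ← C_1, gaussianMean_C]

lemma gaussianMean_twistedDeRham_univ [NeZero (2 : k)] (b : PolyForms k n) :
    gaussianMean (twistedDeRham b univ) = 0 := by
  simp only [twistedDeRham, map_sum, map_smul, ← twistedPderiv_apply, gaussianMean_twistedPderiv,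
    smul_zero, sum_const_zero]

theorem exists_eq_smul_topForm_add_twistedDeRham [CharZero k] {a : PolyForms k n}
    (ha : twistedDeRham a = 0) :
    ∃ (c : k) (b : PolyForms k n), a = c • topForm k n + twistedDeRham b := by
  set D := twistedDeRhamₗ k n
  set K := deRhamHomotopy k n
  choose g r hgr hr using fun S : Finset (Fin n) => exists_eq_hermiteOp_add_C #Sᶜ (a S)
  have hsplit : a = r univ • topForm k n + (D * K + K * D) g := funext fun S => by
    rw [Pi.add_apply, Pi.smul_apply, deRhamHomotopy_anticomm_apply, hgr S, add_comm]
    by_cases hS : S = univ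
    · subst hS; simp [topForm, smul_eq_C_mul]
    · rw [hr S (by rwa [Ne, card_eq_zero, compl_eq_empty_iff]), map_zero, zero_add,
        topForm, if_neg hS, smul_zero, zero_add]
  have hDg : (D * K + K * D) (D g) = 0 := by
    have hDa : D a = 0 := by rw [twistedDeRhamₗ_apply, ha]
    have hDtop : D (topForm k n) = 0 := by rw [twistedDeRhamₗ_apply, twistedDeRham_topForm]
    rw [← Module.End.mul_apply, ← commute_twistedDeRhamₗ_anticomm.eq, Module.End.mul_apply,
      eq_sub_of_add_eq' hsplit.symm, map_sub, map_smul, hDa, hDtop, smul_zero, sub_zero]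
  have hKDg : K (D g) = 0 := deRhamHomotopy_eq_zero_of_forall_eq_C fun S =>
    eq_C_of_hermiteOp_eq_zero (by rw [← deRhamHomotopy_anticomm_apply, hDg, Pi.zero_apply])
  refine ⟨r univ, K g, ?_⟩
  rw [← twistedDeRhamₗ_apply]
  conv_lhs => rw [hsplit]
  rw [LinearMap.add_apply, Module.End.mul_apply, Module.End.mul_apply, hKDg, add_zero]

end Cohomology

end TwistedDeRham

open TwistedDeRham

/-- `D ∘ D = 0`, and the cohomology of the twisted de Rham complex `(Ω^•, D)` of
polynomial forms is concentrated in top degree `n`, where it is one-dimensional, spanned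
by the class of `dx₁∧⋯∧dxₙ`: every closed `p`-form with `p < n` is exact, the top form
is closed and not exact, and every closed form is, modulo exact ones, a scalar multiple
of the top form. -/
theorem twistedDeRham_cohomology (k : Type*) [Field k] [CharZero k] (n : ℕ) :
    (∀ a : PolyForms k n, twistedDeRham (twistedDeRham a) = 0) ∧
    (∀ p : ℕ, p < n → ∀ a : PolyForms k n, FormDegree p a → twistedDeRham a = 0 →
      ∃ b : PolyForms k n, a = twistedDeRham b) ∧
    twistedDeRham (topForm k n) = 0 ∧
    (¬ ∃ b : PolyForms k n, topForm k n = twistedDeRham b) ∧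
    (∀ a : PolyForms k n, twistedDeRham a = 0 →
      ∃ (c : k) (b : PolyForms k n), a = c • topForm k n + twistedDeRham b) := by
  refine ⟨fun a => ?_, fun p hp a hdeg ha => ?_, twistedDeRham_topForm, ?_,
    fun a ha => exists_eq_smul_topForm_add_twistedDeRham ha⟩
  · rw [← twistedDeRhamₗ_apply, ← twistedDeRhamₗ_apply, ← Module.End.mul_apply,
      twistedDeRhamₗ_mul_self, LinearMap.zero_apply]
  · obtain ⟨c, b, rfl⟩ := exists_eq_smul_topForm_add_twistedDeRham ha
    have htop : (c • topForm k n + twistedDeRham b) univ = 0 := by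
      by_contra h
      have := hdeg univ h
      rw [card_univ, Fintype.card_fin] at this
      omega
    have hc := congrArg gaussianMean htop
    rw [Pi.add_apply, Pi.smul_apply, map_add, map_smul, gaussianMean_topForm_univ,
      gaussianMean_twistedDeRham_univ, smul_eq_mul, mul_one, add_zero, map_zero] at hc
    exact ⟨b, by rw [hc, zero_smul, zero_add]⟩
  · rintro ⟨b, hb⟩
    have := congrArg (fun a => gaussianMean (a univ)) hb
    simp only [gaussianMean_topForm_univ, gaussianMean_twistedDeRham_univ] at this
    exact one_ne_zero this
end
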